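/- Let b ≥ 1 be an integer and let G be an arbitrary subset of {1,…,b}². If |G| ≤ (2/3)·b², then the exterior surface of G satisfies |∂G| ≥ (2/5)·|G|^(1/2). -/

import Mathlib

namespace Surface

/-- The discrete grid `{1,…,b}^d ⊂ ℤ^d`. -/
def grid (d b : ℕ) : Set (Fin d → ℤ) := {p | ∀ i, 1 ≤ p i ∧ p i ≤ (b : ℤ)}

/-- The `L¹` distance on `ℤ^d`. -/
def l1 {d : ℕ} (p q : Fin d → ℤ) : ℤ := ∑ i, |p i - q i|

/-- The exterior surface `∂G` of `G` inside the grid `{1,…,b}^d`: points of the grid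
outside `G` at `L¹`-distance exactly `1` from some point of `G`. -/
def extSurf (d b : ℕ) (G : Set (Fin d → ℤ)) : Set (Fin d → ℤ) :=
  {v | v ∈ grid d b ∧ v ∉ G ∧ ∃ u ∈ G, l1 u v = 1}

/-- The interior surface `∂̇G` of `G` inside the grid `{1,…,b}^d`: points of `G` at
`L¹`-distance exactly `1` from some point of the grid outside `G`. -/
def intSurf (d b : ℕ) (G : Set (Fin d → ℤ)) : Set (Fin d → ℤ) :=
  {u | u ∈ G ∧ ∃ v ∈ grid d b, v ∉ G ∧ l1 u v = 1}

end Surface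

/-!
An axis-parallel grid line that meets `G` without lying in `G` contains a point of `∂G`, by a
discrete intermediate value argument. If no grid line lies in `G`, every column and
every row meeting `G` thus carries a point of `∂G`, and `|G| ≤ #columns · #rows ≤ |∂G|²`. If some
column lies in `G`, then all `b` rows meet `G`; at most `|G| / b ≤ 2b/3` of them lie in `G`, so at
least `b/3 ≥ (2/5) · √(2/3) · b` of them carry a point of `∂G`.
-/

open Set

lemma Int.exists_mem_Ico_and_not_succ {P : ℤ → Prop} {a c : ℤ} (hac : a ≤ c) (ha : P a)
    (hc : ¬ P c) : ∃ s ∈ Ico a c, P s ∧ ¬ P (s + 1) := by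
  induction c, hac using Int.leInduction with
  | base => exact absurd ha hc
  | succ c hac ih =>
    by_cases hPc : P c
    · exact ⟨c, ⟨hac, lt_add_one c⟩, hPc, hc⟩
    · obtain ⟨s, ⟨has, hsc⟩, hs⟩ := ih hPc
      exact ⟨s, ⟨has, hsc.trans (lt_add_one c)⟩, hs⟩

lemma Int.ncard_Icc_one_natCast (b : ℕ) : (Icc (1 : ℤ) b).ncard = b := by
  rw [← Finset.coe_Icc, ncard_coe_finset, Int.card_Icc]
  omega

namespace Surface

open Function

variable {d b : ℕ}

lemma l1_update_update (p : Fin d → ℤ) (i : Fin d) (s t : ℤ) :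
    l1 (update p i s) (update p i t) = |s - t| := by
  rw [l1, Finset.sum_eq_single i (fun k _ hk => by simp [hk]) (by simp)]
  simp

lemma update_mem_grid {p : Fin d → ℤ} (hp : p ∈ grid d b) (i : Fin d) {t : ℤ}
    (ht : t ∈ Icc (1 : ℤ) b) : update p i t ∈ grid d b := by
  intro k
  rcases eq_or_ne k i with rfl | hk
  · simpa using ht
  · simpa [hk] using hp k

lemma grid_finite (d b : ℕ) : (grid d b).Finite :=
  (Finite.pi fun _ => finite_Icc (1 : ℤ) b).subset fun _ hp i _ => hp i

lemma extSurf_finite (G : Set (Fin d → ℤ)) : (extSurf d b G).Finite :=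
  (grid_finite d b).subset fun _ hv => hv.1

def gridLine (b : ℕ) (i : Fin d) (p : Fin d → ℤ) : Set (Fin d → ℤ) :=
  update p i '' Icc 1 b

lemma exists_update_mem_extSurf {G : Set (Fin d → ℤ)} (hG : G ⊆ grid d b) {p : Fin d → ℤ}
    (hp : p ∈ G) {i : Fin d} (hline : ¬ gridLine b i p ⊆ G) :
    ∃ t, update p i t ∈ extSurf d b G := by
  obtain ⟨_, ⟨c, hc, rfl⟩, hcG⟩ := not_subset.mp hline
  set P : ℤ → Prop := fun t => update p i t ∈ G
  have hpi : P (p i) := by simpa [P] using hp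
  have hpi_mem : p i ∈ Icc (1 : ℤ) b := hG hp i
  have hstep : ∃ s, Icc s (s + 1) ⊆ Icc (1 : ℤ) b ∧ (P s ↔ ¬ P (s + 1)) := by
    rcases le_total (p i) c with h | h
    · obtain ⟨s, ⟨hs, hsc⟩, hPs, hPs'⟩ := Int.exists_mem_Ico_and_not_succ h hpi hcG
      exact ⟨s, Icc_subset_Icc (hpi_mem.1.trans hs) (hsc.trans_le hc.2), by tauto⟩
    · obtain ⟨s, ⟨hs, hsc⟩, hPs, hPs'⟩ :=
        Int.exists_mem_Ico_and_not_succ (P := fun t => ¬ P t) h hcG (not_not.mpr hpi)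
      exact ⟨s, Icc_subset_Icc (hc.1.trans hs) (hsc.trans_le hpi_mem.2), by tauto⟩
  obtain ⟨s, hs, hflip⟩ := hstep
  have hgrid : ∀ {t}, t ∈ Icc (1 : ℤ) b → update p i t ∈ grid d b :=
    update_mem_grid (hG hp) i
  by_cases hPs : P s
  · refine ⟨s + 1, hgrid (hs ⟨by omega, le_rfl⟩), hflip.mp hPs, _, hPs, ?_⟩
    simp [l1_update_update]
  · refine ⟨s, hgrid (hs ⟨le_rfl, by omega⟩), hPs, _, (by tauto : P (s + 1)), ?_⟩
    simp [l1_update_update]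

-- The lines in direction `i` are the fibres of `p ↦ update p i 0`.
lemma ncard_image_update_le_ncard_extSurf {G : Set (Fin d → ℤ)} (hG : G ⊆ grid d b)
    (i : Fin d) (hnofull : ∀ p ∈ G, ¬ gridLine b i p ⊆ G) :
    ((fun p => update p i 0) '' G).ncard ≤ (extSurf d b G).ncard :=
  calc _ ≤ ((fun p => update p i 0) '' extSurf d b G).ncard := by
        refine ncard_le_ncard ?_ ((extSurf_finite G).image _)
        rintro _ ⟨p, hp, rfl⟩
        obtain ⟨t, ht⟩ := exists_update_mem_extSurf hG hp (hnofull p hp)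
        exact ⟨_, ht, by simp⟩
    _ ≤ _ := ncard_image_le (extSurf_finite G)

lemma ncard_le_mul_ncard_image_update {G : Set (Fin d → ℤ)} (hG : G.Finite) {i j : Fin d}
    (hij : i ≠ j) :
    G.ncard ≤ ((fun p => update p i 0) '' G).ncard * ((fun p => update p j 0) '' G).ncard := by
  rw [← ncard_prod]
  refine ncard_le_ncard_of_injOn (fun p => (update p i 0, update p j 0))
    (fun p hp => ⟨mem_image_of_mem _ hp, mem_image_of_mem _ hp⟩) ?_
    ((hG.image _).prod (hG.image _))
  intro p _ q _ hpq
  simp only [Prod.mk.injEq] at hpq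
  funext k
  rcases eq_or_ne k i with rfl | hk
  · simpa [hij] using congrFun hpq.2 k
  · simpa [hk] using congrFun hpq.1 k

lemma mul_self_le_of_gridLine_subset {G : Set (Fin d → ℤ)} (hG : G ⊆ grid d b) {i j : Fin d}
    (hij : i ≠ j) {p : Fin d → ℤ} (hfull : gridLine b i p ⊆ G) :
    b * b ≤ (extSurf d b G).ncard * b + G.ncard := by
  set T := Icc (1 : ℤ) b
  set q : ℤ → Fin d → ℤ := fun t => update p i t
  have hq : ∀ t ∈ T, q t ∈ G := fun t ht => hfull ⟨t, ht, rfl⟩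
  set F := {t ∈ T | gridLine b j (q t) ⊆ G}
  have hT : (T \ F).ncard + F.ncard = b := by
    rw [ncard_sdiff_add_ncard_of_subset (sep_subset _ _) (finite_Icc _ _),
      Int.ncard_Icc_one_natCast]
  have hnonfull : (T \ F).ncard ≤ (extSurf d b G).ncard :=
    calc _ ≤ ((· i) '' extSurf d b G).ncard := by
          refine ncard_le_ncard ?_ ((extSurf_finite G).image _)
          rintro t ⟨ht, htF⟩
          obtain ⟨s, hs⟩ := exists_update_mem_extSurf hG (hq t ht) (fun h => htF ⟨ht, h⟩)
          exact ⟨_, hs, by simp [q, hij]⟩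
      _ ≤ _ := ncard_image_le (extSurf_finite G)
  have hfull_lines : F.ncard * b ≤ G.ncard := by
    set f : ℤ × ℤ → Fin d → ℤ := fun ts => update (q ts.1) j ts.2
    have hinj : InjOn f (F ×ˢ T) := by
      rintro ⟨t, s⟩ _ ⟨t', s'⟩ _ h
      have hi := congrFun h i
      have hj := congrFun h j
      simp only [f, q, update_self, update_of_ne hij] at hi hj
      simp [hi, hj]
    calc F.ncard * b = (f '' (F ×ˢ T)).ncard := by
          rw [hinj.ncard_image, ncard_prod, Int.ncard_Icc_one_natCast]
      _ ≤ G.ncard := by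
          refine ncard_le_ncard ?_ ((grid_finite d b).subset hG)
          rintro _ ⟨⟨t, s⟩, ⟨htF, hs⟩, rfl⟩
          exact htF.2 ⟨s, hs, rfl⟩
  calc b * b = ((T \ F).ncard + F.ncard) * b := by rw [hT]
    _ ≤ _ := by rw [add_mul]; gcongr

/-- Lemma 34 of the paper: isoperimetry in the discrete square.
Every `G ⊆ {1,…,b}²` with `|G| ≤ (2/3)·b²` satisfies `|∂G| ≥ (2/5)·|G|^(1/2)`. -/
theorem statement19 :
    ∀ b : ℕ, 1 ≤ b → ∀ G : Set (Fin 2 → ℤ), G ⊆ grid 2 b →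
      (G.ncard : ℝ) ≤ 2 / 3 * (b : ℝ) ^ 2 →
      2 / 5 * Real.sqrt (G.ncard : ℝ) ≤ ((extSurf 2 b G).ncard : ℝ) := by
  intro b hb G hG hsmall
  set E := (extSurf 2 b G).ncard
  by_cases hline : ∃ i p, gridLine b i p ⊆ G
  · obtain ⟨i, p, hfull⟩ := hline
    obtain ⟨j, hji⟩ := exists_ne i
    have hcount : (b : ℝ) * b ≤ E * b + G.ncard := by
      exact_mod_cast mul_self_le_of_gridLine_subset hG hji.symm hfull
    have hbpos : (0 : ℝ) < b := by exact_mod_cast hb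
    have hE : (b : ℝ) / 3 ≤ E := le_of_mul_le_mul_right (by nlinarith) hbpos
    have hsqrt : √(G.ncard : ℝ) ≤ 5 / 6 * b :=
      Real.sqrt_le_iff.mpr ⟨by positivity, by nlinarith⟩
    linarith
  · push Not at hline
    have hcols := ncard_image_update_le_ncard_extSurf hG 0 fun p _ => hline 0 p
    have hrows := ncard_image_update_le_ncard_extSurf hG 1 fun p _ => hline 1 p
    have hGE : G.ncard ≤ E * E :=
      (ncard_le_mul_ncard_image_update ((grid_finite 2 b).subset hG) zero_ne_one).trans
        (Nat.mul_le_mul hcols hrows)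
    have hsqrt : √(G.ncard : ℝ) ≤ E :=
      Real.sqrt_le_iff.mpr ⟨by positivity, by rw [sq]; exact_mod_cast hGE⟩
    linarith [Real.sqrt_nonneg (G.ncard : ℝ)]

end Surface
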